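/- Let A be a finite commutative unital ring, n ≥ 5 an integer, x, y ∈ A and a, b units of A with a ≠ b. (i) If n is even and the n-tuple (x, a, b, a, b, …, a, b, y) ∈ A^n (first entry x, last entry y, alternating a, b in between starting with a and ending with b) is a λ-quiddity over A, then y = a·b^{−1}·x and x·(b − x) = 0. (ii) If n is odd and the n-tuple (x, a, b, a, b, …, a, b, a, y) ∈ A^n (first entry x, last entry y, alternating a, b in between starting and ending with a) is a λ-quiddity over A, then y = x and x·(a − a·b^{−1}·x) = 1 − a·b^{−1}. -/

import Mathlib

namespace Quiddity

variable {A : Type*} [CommRing A]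

/-- `mMat [a₁, …, aₙ]` is the matrix product `[[aₙ,-1],[1,0]] ⋯ [[a₁,-1],[1,0]]`. -/
def mMat : List A → Matrix (Fin 2) (Fin 2) A
  | [] => 1
  | a :: t => mMat t * !![a, -1; 1, 0]

/-- Continuant: `cont [] = K₀ = 1`, `cont [a] = K₁(a) = a`, and the continuant recursion. -/
def cont : List A → A
  | [] => 1
  | [a] => a
  | a :: b :: t => a * cont (b :: t) - cont t

/-- A λ-quiddity is a tuple with `Mₙ(a₁,…,aₙ) = ± Id`. -/
def IsQuiddity (l : List A) : Prop := mMat l = 1 ∨ mMat l = -1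

/-- The sum `⊕` of two tuples (meaningful for tuples of length ≥ 2):
`(a₁,…,aₘ) ⊕ (b₁,…,b_l) = (a₁+b_l, a₂,…,a_{m−1}, aₘ+b₁, b₂,…,b_{l−1})`. -/
def oplus (la lb : List A) : List A :=
  (la.headD 0 + lb.getLastD 0) ::
    (la.tail.dropLast ++ (la.getLastD 0 + lb.headD 0) :: lb.tail.dropLast)

/-- Two tuples are equivalent if one is a cyclic permutation of the other or of its
reversal. -/
def TupleEquiv (l l' : List A) : Prop :=
  List.IsRotated l l' ∨ List.IsRotated l.reverse l'

/-- A λ-quiddity `c` is reducible if `c ∼ a ⊕ b` with `b` a λ-quiddity and both of size ≥ 3. -/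
def QuiddityReducible (c : List A) : Prop :=
  ∃ a b : List A, 3 ≤ a.length ∧ 3 ≤ b.length ∧ IsQuiddity b ∧ TupleEquiv c (oplus a b)

/-- `(a, b, a, b, …, a, b)` with `k` repetitions of the pair `(a, b)` (size `2k`). -/
def dynList : ℕ → A → A → List A
  | 0, _, _ => []
  | k + 1, a, b => a :: b :: dynList k a b

/-- `(u, v, v, u, v, v, …, u, v, v)` with `k` repetitions of the block `(u, v, v)`
(size `3k`). -/
def triList : ℕ → A → A → List A
  | 0, _, _ => []
  | k + 1, a, b => a :: b :: b :: triList k a b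

end Quiddity

open Quiddity

/-!
Write `P = M₂(a, b)`. Then `M(a, b, …, a, b) = Pᵏ`, and by Cayley–Hamilton every power of a
`2 × 2` matrix is of the form `c • P + d • 1`. On the other hand `M(x, l, y) = ε • 1` with `ε = ±1`
says `M(l) = ε • M₁(y)⁻¹ M₁(x)⁻¹ = ε • !![-1, x; -y, x * y - 1]`. Comparing the four entries gives
polynomial equations in `c, d, x, y, ε`, from which the claims follow by elimination, cancelling the
units `a` and `b`.
-/

namespace Matrix

variable {R : Type*} [CommRing R]

theorem of_fin_two_inj {α : Type*} {p q r s p' q' r' s' : α} :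
    !![p, q; r, s] = !![p', q'; r', s'] ↔ p = p' ∧ q = q' ∧ r = r' ∧ s = s' := by
  simp only [EmbeddingLike.apply_eq_iff_eq, vecCons_inj, and_true, and_assoc]

theorem smul_fin_two {α : Type*} [Mul α] (c p q r s : α) : c • !![p, q; r, s] = !![c * p, c * q; c * r, c * s] := by
  simp

theorem smul_add_smul_one_fin_two {α : Type*} [Semiring α] (c d p q r s : α) :
    c • !![p, q; r, s] + d • (1 : Matrix (Fin 2) (Fin 2) α) =
      !![c * p + d, c * q; c * r, c * s + d] := by
  simp [one_fin_two]

theorem sq_eq_trace_smul_sub_det_smul_fin_two (M : Matrix (Fin 2) (Fin 2) R) :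
    M ^ 2 = M.trace • M - M.det • 1 := by
  ext i j
  fin_cases i <;> fin_cases j <;> simp [sq, mul_apply, trace_fin_two, det_fin_two] <;> ring

theorem exists_pow_eq_smul_add_smul_one_fin_two (M : Matrix (Fin 2) (Fin 2) R) (k : ℕ) :
    ∃ c d : R, M ^ k = c • M + d • 1 := by
  induction k with
  | zero => exact ⟨0, 1, by simp⟩
  | succ k ih =>
    obtain ⟨c, d, h⟩ := ih
    refine ⟨c * M.trace + d, -(c * M.det), ?_⟩
    rw [pow_succ, h, add_mul, smul_mul_assoc, smul_mul_assoc, Matrix.one_mul, ← sq,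
      sq_eq_trace_smul_sub_det_smul_fin_two]
    module

end Matrix

namespace Quiddity

variable {A : Type*} [CommRing A]

theorem mMat_append (l₁ l₂ : List A) : mMat (l₁ ++ l₂) = mMat l₂ * mMat l₁ := by
  induction l₁ with
  | nil => simp [mMat]
  | cons a t ih => simp [mMat, ih, mul_assoc]

theorem mMat_singleton (a : A) : mMat [a] = !![a, -1; 1, 0] := by
  simp [mMat]

theorem mMat_pair (a b : A) : mMat [a, b] = !![a * b - 1, -b; a, -1] := by
  rw [← List.singleton_append, mMat_append, mMat_singleton, mMat_singleton, Matrix.mul_fin_two,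
    Matrix.of_fin_two_inj]
  exact ⟨by ring, by ring, by ring, by ring⟩

theorem mMat_dynList (k : ℕ) (a b : A) : mMat (dynList k a b) = mMat [a, b] ^ k := by
  induction k with
  | zero => rfl
  | succ k ih =>
    rw [show dynList (k + 1) a b = [a, b] ++ dynList k a b from rfl, mMat_append, ih, pow_succ]

theorem IsQuiddity.exists_mMat_eq {x y : A} {l : List A} (h : IsQuiddity (x :: (l ++ [y]))) :
    ∃ ε : A, ε * ε = 1 ∧ mMat l = !![-ε, ε * x; -(ε * y), ε * (x * y - 1)] := by
  have hinv_left (z : A) : !![0, 1; -1, z] * mMat [z] = 1 := by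
    simp [mMat_singleton, Matrix.one_fin_two]
  have hinv_right (z : A) : mMat [z] * !![0, 1; -1, z] = 1 := by
    simp [mMat_singleton, Matrix.one_fin_two]
  have hM : mMat (x :: (l ++ [y])) = mMat [y] * mMat l * mMat [x] := by
    rw [← List.singleton_append, mMat_append, mMat_append, mul_assoc]
  obtain ⟨ε, hε, hMε⟩ : ∃ ε : A, ε * ε = 1 ∧ mMat (x :: (l ++ [y])) = ε • 1 := by
    rcases h with h | h
    · exact ⟨1, one_mul 1, by rw [h, one_smul]⟩
    · exact ⟨-1, by ring, by rw [h, neg_one_smul]⟩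
  refine ⟨ε, hε, ?_⟩
  calc mMat l = !![0, 1; -1, y] * (mMat [y] * mMat l * mMat [x]) * !![0, 1; -1, x] := by
        simp only [Matrix.mul_assoc, hinv_right, Matrix.mul_one,
          ← Matrix.mul_assoc !![0, 1; -1, y], hinv_left, Matrix.one_mul]
    _ = _ := by
        rw [← hM, hMε, Matrix.mul_smul, Matrix.mul_one, Matrix.smul_mul, Matrix.mul_fin_two,
          Matrix.smul_fin_two, Matrix.of_fin_two_inj]
        exact ⟨by ring, by ring, by ring, by ring⟩

theorem IsQuiddity.dynList_even_ends {x y : A} {a b : Aˣ} {k : ℕ}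
    (h : IsQuiddity (x :: (dynList k (a : A) (b : A) ++ [y]))) :
    y = (a : A) * ((b⁻¹ : Aˣ) : A) * x ∧ x * ((b : A) - x) = 0 := by
  obtain ⟨ε, hε, hM⟩ := h.exists_mMat_eq
  obtain ⟨c, d, hP⟩ := (mMat [(a : A), b]).exists_pow_eq_smul_add_smul_one_fin_two k
  rw [mMat_dynList, hP, mMat_pair, Matrix.smul_add_smul_one_fin_two, Matrix.of_fin_two_inj] at hM
  obtain ⟨h00, h01, h10, h11⟩ := hM
  have hx : x = -(ε * c * b) := by linear_combination -ε * h01 - x * hε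
  have hy : y = -(ε * c * a) := by linear_combination ε * h10 - y * hε
  subst hx hy
  have hc : c * (1 + ε * c) = 0 := (a * b).mul_right_eq_zero.mp <| by
    push_cast
    linear_combination h00 - h11 - ε * a * b * c ^ 2 * hε
  constructor
  · linear_combination ε * c * a * b.inv_mul
  · linear_combination -ε * b ^ 2 * hc

theorem IsQuiddity.dynList_odd_ends {x y a : A} {b : Aˣ} {k : ℕ}
    (h : IsQuiddity (x :: (dynList k a (b : A) ++ [a, y]))) :
    y = x ∧ x * (a - a * ((b⁻¹ : Aˣ) : A) * x) = 1 - a * ((b⁻¹ : Aˣ) : A) := by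
  rw [show dynList k a (b : A) ++ [a, y] = dynList k a b ++ [a] ++ [y] by simp] at h
  obtain ⟨ε, hε, hM⟩ := h.exists_mMat_eq
  obtain ⟨c, d, hP⟩ := (mMat [a, b]).exists_pow_eq_smul_add_smul_one_fin_two k
  rw [mMat_append, mMat_dynList, hP, mMat_pair, mMat_singleton,
    Matrix.smul_add_smul_one_fin_two, Matrix.mul_fin_two, Matrix.of_fin_two_inj] at hM
  obtain ⟨h00, h01, h10, h11⟩ := hM
  obtain rfl : y = x := by linear_combination ε * (h01 + h10) - (y - x) * hε
  have hca : ε * c * a = 1 - a * y := by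
    linear_combination ε * (a * h10 - h00) + (1 - a * y) * hε
  have hcb : ε * c * b = 1 - y * y := by linear_combination -ε * h11 + (1 - y * y) * hε
  refine ⟨rfl, ?_⟩
  linear_combination hca - a * ((b⁻¹ : Aˣ) : A) * hcb + ε * c * a * b.inv_mul

end Quiddity

theorem stmt9_general (A : Type*) [CommRing A] (x y : A) (a b : Aˣ) :
    (∀ n k : ℕ, 5 ≤ n → n = 2 * k + 2 →
      IsQuiddity (x :: (dynList k (a : A) (b : A) ++ [y])) →
      y = (a : A) * ((b⁻¹ : Aˣ) : A) * x ∧ x * ((b : A) - x) = 0) ∧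
    (∀ n k : ℕ, 5 ≤ n → n = 2 * k + 3 →
      IsQuiddity (x :: (dynList k (a : A) (b : A) ++ [(a : A), y])) →
      y = x ∧
        x * ((a : A) - (a : A) * ((b⁻¹ : Aˣ) : A) * x)
          = 1 - (a : A) * ((b⁻¹ : Aˣ) : A)) :=
  ⟨fun _ _ _ _ h => h.dynList_even_ends, fun _ _ _ _ h => h.dynList_odd_ends⟩

/-- values forced at the ends of a λ-quiddity of the form
`(x, a, b, …, a, b, y)` (n even) or `(x, a, b, …, a, b, a, y)` (n odd), `n ≥ 5`. -/
theorem stmt9 (A : Type*) [CommRing A] [Fintype A] (x y : A) (a b : Aˣ) (hab : a ≠ b) :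
    (∀ n k : ℕ, 5 ≤ n → n = 2 * k + 2 →
      IsQuiddity (x :: (dynList k (a : A) (b : A) ++ [y])) →
      y = (a : A) * ((b⁻¹ : Aˣ) : A) * x ∧ x * ((b : A) - x) = 0) ∧
    (∀ n k : ℕ, 5 ≤ n → n = 2 * k + 3 →
      IsQuiddity (x :: (dynList k (a : A) (b : A) ++ [(a : A), y])) →
      y = x ∧
        x * ((a : A) - (a : A) * ((b⁻¹ : Aˣ) : A) * x)
          = 1 - (a : A) * ((b⁻¹ : Aˣ) : A)) :=
  stmt9_general A x y a b
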